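/- Let f : ℝ → ℝ be 1-periodic and C¹ with ∫₀¹ f = 0 and ∫₀¹ f² = 1. Let SW_{2N,τ_N} f(t) = (f(t), f(t+τ_N), …, f(t+2N τ_N)) ∈ ℝ^{2N+1} with τ_N = 1/(2N+1). Then for all t, |1 − ‖C(SW_{2N,τ_N} f(t))‖₂²/(2N+1)| ≤ (C₀/N)·‖f'‖_∞·(1 + ‖f‖_∞) for some absolute constant C₀, where C is the centering map on ℝ^{2N+1}. -/

import Mathlib

/-- The sliding window embedding `SW_{m,τ}f(t) = (f(t), f(t+τ), …, f(t+mτ)) ∈ ℝ^{m+1}`. -/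
noncomputable def SW (m : ℕ) (τ : ℝ) (f : ℝ → ℝ) (t : ℝ) : EuclideanSpace ℝ (Fin (m + 1)) :=
  WithLp.toLp 2 (fun j : Fin (m + 1) => f (t + (j.1 : ℝ) * τ))

/-- The all-ones vector in `ℝ^d`. -/
noncomputable def ones (d : ℕ) : EuclideanSpace ℝ (Fin d) := WithLp.toLp 2 (fun _ => (1 : ℝ))

/-- The centering map `C(x) = x - (⟨x,𝟙⟩/⟨𝟙,𝟙⟩)𝟙`. -/
noncomputable def ctr (d : ℕ) (x : EuclideanSpace ℝ (Fin d)) : EuclideanSpace ℝ (Fin d) :=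
  x - ((inner ℝ x (ones d) : ℝ) / (inner ℝ (ones d) (ones d) : ℝ)) • ones d

lemma inner_ones (d : ℕ) (x : EuclideanSpace ℝ (Fin d)) :
    (inner ℝ x (ones d) : ℝ) = ∑ j, x j := by
  simp [ones, PiLp.inner_apply, RCLike.inner_apply]

lemma inner_ones_ones (d : ℕ) : (inner ℝ (ones d) (ones d) : ℝ) = d := by
  rw [PiLp.inner_apply]; simp [ones]

lemma ctr_norm_sq (d : ℕ) (hd : 0 < d) (x : EuclideanSpace ℝ (Fin d)) :
    ‖ctr d x‖ ^ 2 = (∑ j, (x j) ^ 2) - (∑ j, x j) ^ 2 / d := by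
  have hdR : (0:ℝ) < d := by exact_mod_cast hd
  have hx : ‖x‖ ^ 2 = ∑ j, (x j) ^ 2 := by
    rw [← real_inner_self_eq_norm_sq]
    rw [PiLp.inner_apply]; simp [sq]
  have hones : ‖ones d‖ ^ 2 = d := by
    rw [← real_inner_self_eq_norm_sq, inner_ones_ones]
  set S : ℝ := ∑ j, x j with hS
  have h1 : (inner ℝ x (ones d) : ℝ) = S := inner_ones d x
  rw [ctr, inner_ones_ones, h1, @norm_sub_sq_real, real_inner_smul_right, h1,
    norm_smul, mul_pow, hx, hones]
  have : ‖S / (d:ℝ)‖ ^ 2 = (S / d) ^ 2 := by rw [Real.norm_eq_abs, sq_abs]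
  rw [this]
  field_simp
  ring

lemma riemann (g : ℝ → ℝ) (L : ℝ) (hg : Continuous g)
    (hlip : ∀ a b, |g a - g b| ≤ L * |a - b|)
    (hper : ∀ s, g (s + 1) = g s) (d : ℕ) (hd : 0 < d) (t : ℝ) :
    |(∑ j ∈ Finset.range d, g (t + j * (d:ℝ)⁻¹)) * (d:ℝ)⁻¹ - ∫ s in (0:ℝ)..1, g s|
      ≤ L * (d:ℝ)⁻¹ := by
  have hdR : (0:ℝ) < d := by exact_mod_cast hd
  have hperiodic : Function.Periodic g 1 := hper
  set a : ℕ → ℝ := fun j => t + j * (d:ℝ)⁻¹ with ha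
  have hint : ∀ k, k < d → IntervalIntegrable g MeasureTheory.volume (a k) (a (k+1)) :=
    fun k _ => hg.intervalIntegrable _ _
  have hsplit : ∑ j ∈ Finset.range d, ∫ s in (a j)..(a (j+1)), g s = ∫ s in (a 0)..(a d), g s :=
    intervalIntegral.sum_integral_adjacent_intervals hint
  have ha0 : a 0 = t := by simp [ha]
  have had : a d = t + 1 := by
    simp only [ha]
    rw [mul_inv_cancel₀ (ne_of_gt hdR)]
  have hI : (∫ s in (0:ℝ)..1, g s) = ∫ s in t..(t+1), g s := by
    have h := hperiodic.intervalIntegral_add_eq t 0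
    simp only [zero_add] at h
    exact h.symm
  rw [ha0, had] at hsplit
  rw [hI, ← hsplit, Finset.sum_mul, ← Finset.sum_sub_distrib]
  refine (Finset.abs_sum_le_sum_abs _ _).trans ?_
  have key : ∀ j ∈ Finset.range d,
      |g (t + j * (d:ℝ)⁻¹) * (d:ℝ)⁻¹ - ∫ s in (a j)..(a (j+1)), g s| ≤ L * (d:ℝ)⁻¹ * (d:ℝ)⁻¹ := by
    intro j _
    have hstep : a (j+1) = a j + (d:ℝ)⁻¹ := by simp [ha]; ring
    have hconst : (∫ s in (a j)..(a (j+1)), g (a j)) = g (a j) * (d:ℝ)⁻¹ := by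
      rw [intervalIntegral.integral_const, smul_eq_mul, hstep]; ring
    have hsub : g (t + j * (d:ℝ)⁻¹) * (d:ℝ)⁻¹ - (∫ s in (a j)..(a (j+1)), g s)
        = - ∫ s in (a j)..(a (j+1)), (g s - g (a j)) := by
      rw [intervalIntegral.integral_sub (hg.intervalIntegrable _ _)
        (intervalIntegrable_const), hconst]
      simp [ha]
    rw [hsub, abs_neg]
    have hbound : ∀ s ∈ Set.uIoc (a j) (a (j+1)), ‖g s - g (a j)‖ ≤ L * (d:ℝ)⁻¹ := by
      intro s hs
      rw [hstep, Set.uIoc_of_le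
        (le_add_of_nonneg_right (by positivity) : a j ≤ a j + (d:ℝ)⁻¹)] at hs
      have h1 : |s - a j| ≤ (d:ℝ)⁻¹ := by
        rw [abs_of_pos (by linarith [hs.1])]; linarith [hs.2]
      have hL0 : 0 ≤ L := by
        have := hlip (a j + 1) (a j)
        simp at this
        nlinarith [abs_nonneg (g (a j + 1) - g (a j))]
      calc ‖g s - g (a j)‖ = |g s - g (a j)| := rfl
        _ ≤ L * |s - a j| := hlip _ _
        _ ≤ L * (d:ℝ)⁻¹ := by nlinarith
    have := intervalIntegral.norm_integral_le_of_norm_le_const hbound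
    rw [hstep, show a j + (↑d)⁻¹ - a j = (↑d)⁻¹ by ring,
      abs_of_pos (by positivity : (0:ℝ) < (d:ℝ)⁻¹), ← hstep] at this
    exact this
  refine (Finset.sum_le_sum key).trans ?_
  rw [Finset.sum_const, Finset.card_range, nsmul_eq_mul]
  rw [show (d:ℝ) * (L * (d:ℝ)⁻¹ * (d:ℝ)⁻¹) = L * (d:ℝ)⁻¹ * ((d:ℝ) * (d:ℝ)⁻¹) by ring,
    mul_inv_cancel₀ (ne_of_gt hdR), mul_one]

lemma bdd_abs_of_periodic (g : ℝ → ℝ) (hg : Continuous g) (hper : ∀ s, g (s + 1) = g s) :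
    BddAbove (Set.range fun s => |g s|) := by
  have hperiodic : Function.Periodic g 1 := hper
  obtain ⟨B, hB⟩ := (isCompact_Icc (a := (0:ℝ)) (b := 1)).bddAbove_image
    (hg.abs.continuousOn)
  refine ⟨B, ?_⟩
  rintro y ⟨s, rfl⟩
  have h1 : g s = g (Int.fract s) := by
    have := hperiodic.sub_int_mul_eq (x := s) ⌊s⌋
    rw [mul_one] at this
    rw [Int.fract]
    exact this.symm
  have h2 : Int.fract s ∈ Set.Icc (0:ℝ) 1 :=
    ⟨Int.fract_nonneg s, le_of_lt (Int.fract_lt_one s)⟩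
  exact hB ⟨Int.fract s, h2, by simp [← h1]⟩

theorem stmt6 :
    ∃ C₀ : ℝ, 0 < C₀ ∧ ∀ (f : ℝ → ℝ) (N : ℕ) (t : ℝ),
      0 < N → ContDiff ℝ 1 f → (∀ s, f (s + 1) = f s) →
      (∫ s in (0:ℝ)..1, f s) = 0 → (∫ s in (0:ℝ)..1, (f s) ^ 2) = 1 →
      |1 - ‖ctr (2 * N + 1) (SW (2 * N) ((2 * (N : ℝ) + 1)⁻¹) f t)‖ ^ 2 / (2 * (N : ℝ) + 1)|
        ≤ (C₀ / N) * (⨆ s : ℝ, |deriv f s|) * (1 + ⨆ s : ℝ, |f s|) := by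
  refine ⟨3, by norm_num, ?_⟩
  intro f N t hN hf hper hi0 hi1
  have hfc : Continuous f := hf.continuous
  have hdc : Continuous (deriv f) := hf.continuous_deriv le_rfl
  have hperd : ∀ s, deriv f (s + 1) = deriv f s := by
    intro s
    have h : (fun x => f (x + 1)) = f := funext hper
    conv_rhs => rw [← h, deriv_comp_add_const f 1 s]
  set K := ⨆ s : ℝ, |f s| with hKdef
  set M := ⨆ s : ℝ, |deriv f s| with hMdef
  have hbK := bdd_abs_of_periodic f hfc hper
  have hbM := bdd_abs_of_periodic (deriv f) hdc hperd
  have hK : ∀ s, |f s| ≤ K := fun s => le_ciSup hbK s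
  have hM : ∀ s, |deriv f s| ≤ M := fun s => le_ciSup hbM s
  have hK0 : 0 ≤ K := le_trans (abs_nonneg _) (hK 0)
  have hM0 : 0 ≤ M := le_trans (abs_nonneg _) (hM 0)
  have hlipf : ∀ a b, |f a - f b| ≤ M * |a - b| := by
    intro a b
    have hlip : LipschitzWith M.toNNReal f := by
      apply lipschitzWith_of_nnnorm_deriv_le (hf.differentiable one_ne_zero)
      intro x
      rw [← NNReal.coe_le_coe, coe_nnnorm, Real.coe_toNNReal M hM0]
      exact hM x
    have := hlip.dist_le_mul a b
    rwa [Real.dist_eq, Real.dist_eq, Real.coe_toNNReal M hM0] at this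
  have hlipf2 : ∀ a b, |f a ^ 2 - f b ^ 2| ≤ (2 * K * M) * |a - b| := by
    intro a b
    rw [show f a ^ 2 - f b ^ 2 = (f a + f b) * (f a - f b) by ring, abs_mul]
    have h1 : |f a + f b| ≤ 2 * K := (abs_add_le _ _).trans (by linarith [hK a, hK b])
    calc |f a + f b| * |f a - f b| ≤ (2 * K) * (M * |a - b|) :=
          mul_le_mul h1 (hlipf a b) (abs_nonneg _) (by positivity)
      _ = (2 * K * M) * |a - b| := by ring
  set d : ℕ := 2 * N + 1 with hdd
  have hd : 0 < d := Nat.succ_pos _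
  have hdR : (0:ℝ) < d := by exact_mod_cast hd
  have hcast : ((d:ℕ):ℝ) = 2 * (N:ℝ) + 1 := by rw [hdd]; push_cast; ring
  set Q := ∑ j ∈ Finset.range d, f (t + j * (d:ℝ)⁻¹) ^ 2 with hQdef
  set S := ∑ j ∈ Finset.range d, f (t + j * (d:ℝ)⁻¹) with hSdef
  have hR1 := riemann f M hfc hlipf hper d hd t
  rw [hi0, sub_zero, ← hSdef] at hR1
  have hR2 := riemann (fun s => f s ^ 2) (2 * K * M) (by continuity) hlipf2
    (fun s => by simp [hper s]) d hd t
  rw [hi1, ← hQdef] at hR2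
  have hnorm : ‖ctr d (SW (2 * N) ((2 * (N:ℝ) + 1)⁻¹) f t)‖ ^ 2 = Q - S ^ 2 / d := by
    rw [ctr_norm_sq d hd]
    have hx : ∀ j : Fin d, SW (2 * N) ((2 * (N:ℝ) + 1)⁻¹) f t j = f (t + j.1 * (d:ℝ)⁻¹) := by
      intro j; rw [SW, hcast]
    have e1 : (∑ j : Fin d, (SW (2 * N) ((2 * (N:ℝ) + 1)⁻¹) f t j) ^ 2) = Q := by
      rw [hQdef, ← Fin.sum_univ_eq_sum_range (fun i => f (t + i * (d:ℝ)⁻¹) ^ 2) d]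
      exact Finset.sum_congr rfl fun j _ => by rw [hx j]
    have e2 : (∑ j : Fin d, SW (2 * N) ((2 * (N:ℝ) + 1)⁻¹) f t j) = S := by
      rw [hSdef, ← Fin.sum_univ_eq_sum_range (fun i => f (t + i * (d:ℝ)⁻¹)) d]
      exact Finset.sum_congr rfl fun j _ => by rw [hx j]
    rw [e1, e2]
  have hSK : |S * (d:ℝ)⁻¹| ≤ K := by
    have h1 : |S| ≤ (d:ℝ) * K := by
      refine (Finset.abs_sum_le_sum_abs _ _).trans ?_
      calc ∑ j ∈ Finset.range d, |f (t + j * (d:ℝ)⁻¹)| ≤ ∑ _j ∈ Finset.range d, K :=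
            Finset.sum_le_sum fun j _ => hK _
        _ = (d:ℝ) * K := by rw [Finset.sum_const, Finset.card_range, nsmul_eq_mul]
    rw [abs_mul, abs_of_pos (by positivity : (0:ℝ) < (d:ℝ)⁻¹)]
    calc |S| * (d:ℝ)⁻¹ ≤ ((d:ℝ) * K) * (d:ℝ)⁻¹ := by
          apply mul_le_mul_of_nonneg_right h1 (by positivity)
      _ = K := by field_simp
  have hgoal : 1 - (Q - S ^ 2 / d) / (2 * (N:ℝ) + 1)
      = (1 - Q * (d:ℝ)⁻¹) + (S * (d:ℝ)⁻¹) ^ 2 := by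
    rw [← hcast]; field_simp; ring
  rw [hnorm, hgoal]
  have he1 : |1 - Q * (d:ℝ)⁻¹| ≤ 2 * K * M * (d:ℝ)⁻¹ := by
    rw [abs_sub_comm]; exact hR2
  have he2 : |(S * (d:ℝ)⁻¹) ^ 2| ≤ K * (M * (d:ℝ)⁻¹) := by
    rw [abs_pow, sq]
    exact mul_le_mul hSK hR1 (abs_nonneg _) hK0
  have htot : |(1 - Q * (d:ℝ)⁻¹) + (S * (d:ℝ)⁻¹) ^ 2| ≤ 3 * K * M * (d:ℝ)⁻¹ := by
    refine (abs_add_le _ _).trans ?_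
    nlinarith [he1, he2]
  refine htot.trans ?_
  have hNR : (0:ℝ) < N := by exact_mod_cast hN
  have hinv : (d:ℝ)⁻¹ ≤ (N:ℝ)⁻¹ := by
    apply inv_anti₀ hNR
    rw [hcast]; linarith
  have h1 : 3 * K * M * (d:ℝ)⁻¹ ≤ 3 * K * M * (N:ℝ)⁻¹ := by
    apply mul_le_mul_of_nonneg_left hinv (by positivity)
  refine h1.trans ?_
  rw [div_eq_mul_inv]
  nlinarith [mul_nonneg (mul_nonneg (by norm_num : (0:ℝ) ≤ 3) (inv_nonneg.mpr hNR.le)) hM0]
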